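/- arXiv:2210.01945 — 3 statements merged into one kernel-verified Lean document; each statement's English description precedes it below -/
import Mathlib

section
/- On an n-dimensional gradient Ricci soliton (n ≥ 3) with Ric + Hess f = ρg and λ = 2ρ, the tensor D defined by D_{ijk} = (1/(n−2))(R_{jk}∇_i f − R_{ik}∇_j f) + (1/(2(n−1)(n−2)))(g_{jk}∇_i R − g_{ik}∇_j R) − (R/((n−1)(n−2)))(g_{jk}∇_i f − g_{ik}∇_j f) satisfies the pointwise norm identity: |D|² = (2/(n−2)²)|Ric|²|∇f|² − (1/(2(n−2)²))|∇R|² − (1/(2(n−1)(n−2)²))|2R∇f − ∇R|². -/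
/-- The Cao–Chen 3-tensor `D_{ijk}` of a gradient Ricci soliton, in an orthonormal
frame (`g_{jk} = δ_{jk}`):
`D_{ijk} = (1/(n−2))(R_{jk}∇_i f − R_{ik}∇_j f)
 + (1/(2(n−1)(n−2)))(g_{jk}∇_i R − g_{ik}∇_j R)
 − (R/((n−1)(n−2)))(g_{jk}∇_i f − g_{ik}∇_j f)`. -/
noncomputable def Dtensor (n : ℕ) (R : ℝ) (gradf gradR : Fin n → ℝ)
    (Ric : Matrix (Fin n) (Fin n) ℝ) (i j k : Fin n) : ℝ :=
  (1 / ((n : ℝ) - 2)) * (Ric j k * gradf i - Ric i k * gradf j)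
  + (1 / (2 * ((n : ℝ) - 1) * ((n : ℝ) - 2)))
      * ((if j = k then (1 : ℝ) else 0) * gradR i - (if i = k then (1 : ℝ) else 0) * gradR j)
  - (R / (((n : ℝ) - 1) * ((n : ℝ) - 2)))
      * ((if j = k then (1 : ℝ) else 0) * gradf i - (if i = k then (1 : ℝ) else 0) * gradf j)

/-!
Both halves of `D` have the shape `T(M, x)_{ijk} = M_{jk} x_i - M_{ik} x_j`: with `w = ∇R - 2R∇f`,
`D = T(Ric, ∇f)/(n-2) + T(g, w)/(2(n-1)(n-2))`. Contracting two such tensors gives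
`⟨T(M, x), T(N, y)⟩ = 2⟨M, N⟩⟨x, y⟩ - 2⟨yM, xN⟩`, and since `Ric(∇f) = ∇R/2` the three pairings are
`2|Ric|²|∇f|² - |∇R|²/2`, `-|w|²` and `2(n-1)|w|²`.
-/

open Matrix Finset

variable {ι α : Type*} [Fintype ι] [CommRing α]

def skewTensor (M : Matrix ι ι α) (x : ι → α) (i j k : ι) : α :=
  M j k * x i - M i k * x j

lemma sum_skewTensor_mul_skewTensor (M N : Matrix ι ι α) (x y : ι → α) :
    ∑ i, ∑ j, ∑ k, skewTensor M x i j k * skewTensor N y i j k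
      = 2 * (∑ j, ∑ k, M j k * N j k) * (x ⬝ᵥ y) - 2 * ((y ᵥ* M) ⬝ᵥ (x ᵥ* N)) := by
  have diag : ∀ M N : Matrix ι ι α, ∀ x y : ι → α,
      ∑ i, ∑ j, ∑ k, M j k * x i * (N j k * y i) = (∑ j, ∑ k, M j k * N j k) * (x ⬝ᵥ y) := by
    intro M N x y
    simp_rw [show ∀ i j k, M j k * x i * (N j k * y i) = x i * y i * (M j k * N j k) from
      fun _ _ _ => by ring, ← mul_sum, ← sum_mul, dotProduct, mul_comm]
  have cross : ∀ M N : Matrix ι ι α, ∀ x y : ι → α,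
      ∑ i, ∑ j, ∑ k, M j k * x i * (N i k * y j) = (y ᵥ* M) ⬝ᵥ (x ᵥ* N) := by
    intro M N x y
    calc ∑ i, ∑ j, ∑ k, M j k * x i * (N i k * y j)
        = ∑ k, ∑ j, ∑ i, y j * M j k * (x i * N i k) := by
          rw [sum_comm]
          simp_rw [sum_comm (γ := ι) (f := fun i k => M _ k * x i * (N i k * y _))]
          rw [sum_comm]
          exact sum_congr rfl fun _ _ => sum_congr rfl fun _ _ =>
            sum_congr rfl fun _ _ => by ring
      _ = (y ᵥ* M) ⬝ᵥ (x ᵥ* N) := by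
          simp only [dotProduct, vecMul, sum_mul_sum]
  have expand : ∀ i j k, skewTensor M x i j k * skewTensor N y i j k
      = M j k * x i * (N j k * y i) + M i k * x j * (N i k * y j)
        - (M j k * x i * (N i k * y j) + N j k * y i * (M i k * x j)) := by
    intro i j k; simp only [skewTensor]; ring
  simp only [expand, sum_add_distrib, sum_sub_distrib]
  rw [diag, cross, cross N M y x, dotProduct_comm (x ᵥ* N)]
  rw [sum_comm (f := fun i j => ∑ k, M i k * x j * (N i k * y j)), diag]
  ring

section One

variable [DecidableEq ι]

lemma sum_skewTensor_mul_skewTensor_one (M : Matrix ι ι α) (x y : ι → α) :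
    ∑ i, ∑ j, ∑ k, skewTensor M x i j k * skewTensor 1 y i j k
      = 2 * M.trace * (x ⬝ᵥ y) - 2 * (y ⬝ᵥ (M *ᵥ x)) := by
  have htrace : ∑ j, ∑ k, M j k * (1 : Matrix ι ι α) j k = M.trace := by
    simp [one_apply, Matrix.trace]
  rw [sum_skewTensor_mul_skewTensor, htrace, vecMul_one, dotProduct_mulVec]

lemma sum_skewTensor_one_mul_skewTensor_one (x y : ι → α) :
    ∑ i, ∑ j, ∑ k, skewTensor 1 x i j k * skewTensor 1 y i j k
      = 2 * (Fintype.card ι - 1) * (x ⬝ᵥ y) := by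
  rw [sum_skewTensor_mul_skewTensor_one, trace_one, one_mulVec, dotProduct_comm y]
  ring

end One

lemma sum_skewTensor_mul_self_of_isSymm {M : Matrix ι ι α} (hM : M.IsSymm) (x : ι → α) :
    ∑ i, ∑ j, ∑ k, skewTensor M x i j k * skewTensor M x i j k
      = 2 * (∑ j, ∑ k, M j k ^ 2) * (x ⬝ᵥ x) - 2 * ((M *ᵥ x) ⬝ᵥ (M *ᵥ x)) := by
  rw [sum_skewTensor_mul_skewTensor, ← vecMul_transpose, hM.eq]
  simp only [sq]

lemma sum_sum_sum_mul_add_mul_sq (a b : α) (S T : ι → ι → ι → α) :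
    ∑ i, ∑ j, ∑ k, (a * S i j k + b * T i j k) ^ 2
      = a ^ 2 * ∑ i, ∑ j, ∑ k, S i j k * S i j k + 2 * a * b * ∑ i, ∑ j, ∑ k, S i j k * T i j k
        + b ^ 2 * ∑ i, ∑ j, ∑ k, T i j k * T i j k := by
  simp only [mul_sum, ← sum_add_distrib]
  exact sum_congr rfl fun _ _ => sum_congr rfl fun _ _ => sum_congr rfl fun _ _ => by ring

lemma Dtensor_eq_skewTensor (n : ℕ) (R : ℝ) (gradf gradR : Fin n → ℝ)
    (Ric : Matrix (Fin n) (Fin n) ℝ) (i j k : Fin n) :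
    Dtensor n R gradf gradR Ric i j k
      = 1 / ((n : ℝ) - 2) * skewTensor Ric gradf i j k
        + 1 / (2 * ((n : ℝ) - 1) * ((n : ℝ) - 2)) * skewTensor 1 (gradR - (2 * R) • gradf) i j k := by
  simp only [Dtensor, skewTensor, one_apply, Pi.sub_apply, Pi.smul_apply, smul_eq_mul, div_eq_mul_inv,
    mul_inv]
  ring

theorem stmt_7_general (n : ℕ) (hn : 3 ≤ n) (R : ℝ)
    (gradf gradR : Fin n → ℝ) (Ric : Matrix (Fin n) (Fin n) ℝ)
    (hsymm : Ric.IsSymm) (htrace : Ric.trace = R)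
    (hBianchi : ∀ i, gradR i = 2 * ∑ j, Ric i j * gradf j) :
    ∑ i, ∑ j, ∑ k, (Dtensor n R gradf gradR Ric i j k) ^ 2
      = (2 / ((n : ℝ) - 2) ^ 2) * (∑ i, ∑ j, (Ric i j) ^ 2) * (∑ i, (gradf i) ^ 2)
        - (1 / (2 * ((n : ℝ) - 2) ^ 2)) * (∑ i, (gradR i) ^ 2)
        - (1 / (2 * ((n : ℝ) - 1) * ((n : ℝ) - 2) ^ 2))
            * (∑ i, (2 * R * gradf i - gradR i) ^ 2) := by
  have hn3 : (3 : ℝ) ≤ n := by exact_mod_cast hn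
  have hn2 : (n : ℝ) - 2 ≠ 0 := by linarith
  have hn1 : (n : ℝ) - 1 ≠ 0 := by linarith
  set w : Fin n → ℝ := gradR - (2 * R) • gradf
  have hRicf : Ric *ᵥ gradf = (1 / 2 : ℝ) • gradR := by
    ext i; simp [hBianchi, mulVec, dotProduct]
  have hcross : ∑ i, ∑ j, ∑ k, skewTensor Ric gradf i j k * skewTensor 1 w i j k = -(w ⬝ᵥ w) := by
    have hww : w ⬝ᵥ w = w ⬝ᵥ gradR - 2 * R * (w ⬝ᵥ gradf) := by
      rw [← smul_eq_mul, ← dotProduct_smul, ← dotProduct_sub]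
    rw [sum_skewTensor_mul_skewTensor_one, htrace, hRicf, hww, dotProduct_smul, smul_eq_mul,
      dotProduct_comm gradf]
    ring
  have hw : ∑ i, (2 * R * gradf i - gradR i) ^ 2 = w ⬝ᵥ w :=
    sum_congr rfl fun i _ => by simp only [w, Pi.sub_apply, Pi.smul_apply, smul_eq_mul]; ring
  have hself : ∀ v : Fin n → ℝ, ∑ i, v i ^ 2 = v ⬝ᵥ v := fun v => by simp only [dotProduct, sq]
  simp only [Dtensor_eq_skewTensor]
  rw [sum_sum_sum_mul_add_mul_sq, sum_skewTensor_mul_self_of_isSymm hsymm, hcross,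
    sum_skewTensor_one_mul_skewTensor_one, hRicf, hw, hself gradf, hself gradR, dotProduct_smul,
    smul_dotProduct, Fintype.card_fin, smul_eq_mul]
  field_simp
  ring

/-- pointwise norm identity for the `D`-tensor of a gradient Ricci soliton,
using the soliton identities `∇R = 2Ric(∇f)` and `R + |∇f|² = λf`. -/
theorem stmt_7 (n : ℕ) (hn : 3 ≤ n) (ρ lam R f : ℝ) (hlam : lam = 2 * ρ)
    (gradf gradR : Fin n → ℝ) (Ric : Matrix (Fin n) (Fin n) ℝ)
    (hsymm : Ric.IsSymm) (htrace : Ric.trace = R)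
    (hBianchi : ∀ i, gradR i = 2 * ∑ j, Ric i j * gradf j)
    (hnorm : R + ∑ i, (gradf i) ^ 2 = lam * f) :
    ∑ i, ∑ j, ∑ k, (Dtensor n R gradf gradR Ric i j k) ^ 2
      = (2 / ((n : ℝ) - 2) ^ 2) * (∑ i, ∑ j, (Ric i j) ^ 2) * (∑ i, (gradf i) ^ 2)
        - (1 / (2 * ((n : ℝ) - 2) ^ 2)) * (∑ i, (gradR i) ^ 2)
        - (1 / (2 * ((n : ℝ) - 1) * ((n : ℝ) - 2) ^ 2))
            * (∑ i, (2 * R * gradf i - gradR i) ^ 2) :=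
  stmt_7_general n hn R gradf gradR Ric hsymm htrace hBianchi
end

section
/- On an n-dimensional gradient Ricci soliton (n ≥ 3) with Ric + Hess f = ρg, λ = 2ρ, and normalized so that R + |∇f|² = λf, the following pointwise identity holds: (n−2)²|D|² + |2R∇f − ∇R|²/(2(n−1)) = |∇f|²⟨∇R,∇f⟩ − |∇f|²ΔR + λR|∇f|² − (1/2)|∇R|². -/
open Finset Matrix

section

variable {ι : Type*} [Fintype ι]

theorem sum_sq_wedge (M : Matrix ι ι ℝ) (v : ι → ℝ) :
    ∑ i, ∑ j, ∑ k, (M j k * v i - M i k * v j) ^ 2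
      = 2 * (v ⬝ᵥ v) * ∑ i, ∑ j, M i j ^ 2 - 2 * (v ᵥ* M) ⬝ᵥ (v ᵥ* M) := by
  have hsq : ∑ i, ∑ j, ∑ k, (M j k * v i) ^ 2 = (v ⬝ᵥ v) * ∑ i, ∑ j, M i j ^ 2 := by
    simp only [mul_pow, ← sum_mul, ← mul_sum, dotProduct, ← sq]
    ring
  have hsq' : ∑ i, ∑ j, ∑ k, (M i k * v j) ^ 2 = (v ⬝ᵥ v) * ∑ i, ∑ j, M i j ^ 2 := by
    rw [sum_comm, hsq]
  have hcross : ∑ i, ∑ j, ∑ k, 2 * (M j k * v i) * (M i k * v j)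
      = 2 * (v ᵥ* M) ⬝ᵥ (v ᵥ* M) := by
    rw [sum_comm_cycle]
    simp only [dotProduct, vecMul, mul_sum, sum_mul]
    exact sum_congr rfl fun _ _ => sum_congr rfl fun _ _ => sum_congr rfl fun _ _ => by ring
  simp only [sub_sq, sum_add_distrib, sum_sub_distrib, hsq, hsq', hcross]
  ring

variable [DecidableEq ι]

theorem sum_wedge_mul_kronecker (M : Matrix ι ι ℝ) (v c : ι → ℝ) :
    ∑ i, ∑ j, ∑ k, (M j k * v i - M i k * v j) *
      ((if j = k then (1 : ℝ) else 0) * c i - (if i = k then (1 : ℝ) else 0) * c j)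
      = 2 * M.trace * (v ⬝ᵥ c) - 2 * (M *ᵥ v) ⬝ᵥ c := by
  have hMv : ∑ i, ∑ j, M i j * v j * c i = (M *ᵥ v) ⬝ᵥ c := by
    simp only [dotProduct, mulVec, sum_mul]
  simp only [mul_sub, sub_mul, ite_mul, one_mul, zero_mul, mul_ite, mul_zero, sum_sub_distrib,
    sum_ite_eq, mem_univ, if_true]
  rw [sum_comm (f := fun i j => M j i * v i * c j), hMv]
  simp only [trace, Matrix.diag, dotProduct, ← sum_mul, mul_assoc, ← mul_sum]
  ring

theorem sum_sq_kronecker (c : ι → ℝ) :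
    ∑ i, ∑ j, ∑ k, ((if j = k then (1 : ℝ) else 0) * c i - (if i = k then (1 : ℝ) else 0) * c j) ^ 2
      = 2 * (Fintype.card ι - 1) * c ⬝ᵥ c := by
  simp only [dotProduct, sub_sq, ite_pow, zero_pow two_ne_zero, ite_mul, one_mul, zero_mul, mul_ite,
    mul_zero, sum_add_distrib, sum_sub_distrib, sum_ite_eq, sum_ite_eq', mem_univ, if_true, sum_const,
    card_univ, nsmul_eq_mul]
  simp only [mul_assoc, ← mul_sum, ← sq]
  ring

theorem sum_sq_wedge_add_kronecker (M : Matrix ι ι ℝ) (v c : ι → ℝ) :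
    ∑ i, ∑ j, ∑ k, ((M j k * v i - M i k * v j) +
      ((if j = k then (1 : ℝ) else 0) * c i - (if i = k then (1 : ℝ) else 0) * c j)) ^ 2
      = 2 * (v ⬝ᵥ v) * ∑ i, ∑ j, M i j ^ 2 - 2 * (v ᵥ* M) ⬝ᵥ (v ᵥ* M)
        + 4 * M.trace * (v ⬝ᵥ c) - 4 * (M *ᵥ v) ⬝ᵥ c + 2 * (Fintype.card ι - 1) * c ⬝ᵥ c := by
  simp only [add_sq, sum_add_distrib, mul_assoc, ← mul_sum]
  rw [sum_sq_wedge, sum_wedge_mul_kronecker, sum_sq_kronecker]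
  ring

end

theorem sub_two_mul_Dtensor {n : ℕ} (hn : n ≠ 2) (R : ℝ) (gradf gradR : Fin n → ℝ)
    (Ric : Matrix (Fin n) (Fin n) ℝ) (i j k : Fin n) :
    ((n : ℝ) - 2) * Dtensor n R gradf gradR Ric i j k
      = (Ric j k * gradf i - Ric i k * gradf j)
        + ((if j = k then (1 : ℝ) else 0) * ((gradR i - 2 * R * gradf i) / (2 * ((n : ℝ) - 1)))
          - (if i = k then (1 : ℝ) else 0) * ((gradR j - 2 * R * gradf j) / (2 * ((n : ℝ) - 1)))) := by
  have h2 : (n : ℝ) - 2 ≠ 0 := sub_ne_zero.mpr (mod_cast hn)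
  simp only [Dtensor]
  field_simp
  ring

theorem sq_sub_two_mul_sum_sq_Dtensor {n : ℕ} (hn1 : n ≠ 1) (hn2 : n ≠ 2) (R : ℝ)
    (gradf gradR : Fin n → ℝ) (Ric : Matrix (Fin n) (Fin n) ℝ) (hsymm : Ric.IsSymm)
    (htrace : Ric.trace = R) (hBianchi : gradR = (2 : ℝ) • Ric *ᵥ gradf) :
    ((n : ℝ) - 2) ^ 2 * ∑ i, ∑ j, ∑ k, Dtensor n R gradf gradR Ric i j k ^ 2
      = 2 * (gradf ⬝ᵥ gradf) * ∑ i, ∑ j, Ric i j ^ 2 - gradR ⬝ᵥ gradR / 2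
        - ((2 * R) • gradf - gradR) ⬝ᵥ ((2 * R) • gradf - gradR) / (2 * ((n : ℝ) - 1)) := by
  have h1 : (n : ℝ) - 1 ≠ 0 := sub_ne_zero.mpr (mod_cast hn1)
  have hRic : Ric *ᵥ gradf = (1 / 2 : ℝ) • gradR := by
    rw [hBianchi, smul_smul]; norm_num
  have hRic' : gradf ᵥ* Ric = (1 / 2 : ℝ) • gradR := by
    rw [← hRic, ← vecMul_transpose, hsymm.eq]
  have hc : (fun i => (gradR i - 2 * R * gradf i) / (2 * ((n : ℝ) - 1)))
      = (-1 / (2 * ((n : ℝ) - 1))) • ((2 * R) • gradf - gradR) := by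
    ext i; simp only [Pi.smul_apply, Pi.sub_apply, smul_eq_mul]; ring
  have hscale : ((n : ℝ) - 2) ^ 2 * ∑ i, ∑ j, ∑ k, Dtensor n R gradf gradR Ric i j k ^ 2
      = ∑ i, ∑ j, ∑ k, (((n : ℝ) - 2) * Dtensor n R gradf gradR Ric i j k) ^ 2 := by
    simp only [mul_sum, mul_pow]
  simp only [hscale, sub_two_mul_Dtensor hn2]
  rw [sum_sq_wedge_add_kronecker Ric gradf, hc, hRic, hRic', htrace, Fintype.card_fin]
  simp only [smul_dotProduct, dotProduct_smul, sub_dotProduct, dotProduct_sub, smul_eq_mul,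
    dotProduct_comm gradf gradR]
  field_simp
  ring

theorem stmt_8_general (n : ℕ) (hn : 3 ≤ n) (lam R ΔR : ℝ)
    (gradf gradR : Fin n → ℝ) (Ric : Matrix (Fin n) (Fin n) ℝ)
    (hsymm : Ric.IsSymm) (htrace : Ric.trace = R)
    (hBianchi : ∀ i, gradR i = 2 * ∑ j, Ric i j * gradf j)
    (hElliptic : 2 * ∑ i, ∑ j, (Ric i j) ^ 2
      = (∑ i, gradR i * gradf i) + lam * R - ΔR) :
    ((n : ℝ) - 2) ^ 2 * (∑ i, ∑ j, ∑ k, (Dtensor n R gradf gradR Ric i j k) ^ 2)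
        + (∑ i, (2 * R * gradf i - gradR i) ^ 2) / (2 * ((n : ℝ) - 1))
      = (∑ i, (gradf i) ^ 2) * (∑ i, gradR i * gradf i)
        - (∑ i, (gradf i) ^ 2) * ΔR
        + lam * R * (∑ i, (gradf i) ^ 2)
        - (1 / 2) * (∑ i, (gradR i) ^ 2) := by
  rw [sq_sub_two_mul_sum_sq_Dtensor (by omega) (by omega) R gradf gradR Ric hsymm htrace
    (funext hBianchi)]
  simp only [dotProduct, Pi.sub_apply, Pi.smul_apply, smul_eq_mul, ← sq]
  linear_combination (∑ i, gradf i ^ 2) * hElliptic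

/-- pointwise identity
`(n−2)²|D|² + |2R∇f − ∇R|²/(2(n−1)) = |∇f|²⟨∇R,∇f⟩ − |∇f|²ΔR + λR|∇f|² − |∇R|²/2`,
using the soliton identity `2|Ric|² = ⟨∇R,∇f⟩ + λR − ΔR`. -/
theorem stmt_8 (n : ℕ) (hn : 3 ≤ n) (ρ lam R f ΔR : ℝ) (hlam : lam = 2 * ρ)
    (gradf gradR : Fin n → ℝ) (Ric : Matrix (Fin n) (Fin n) ℝ)
    (hsymm : Ric.IsSymm) (htrace : Ric.trace = R)
    (hBianchi : ∀ i, gradR i = 2 * ∑ j, Ric i j * gradf j)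
    (hnorm : R + ∑ i, (gradf i) ^ 2 = lam * f)
    (hElliptic : 2 * ∑ i, ∑ j, (Ric i j) ^ 2
      = (∑ i, gradR i * gradf i) + lam * R - ΔR) :
    ((n : ℝ) - 2) ^ 2 * (∑ i, ∑ j, ∑ k, (Dtensor n R gradf gradR Ric i j k) ^ 2)
        + (∑ i, (2 * R * gradf i - gradR i) ^ 2) / (2 * ((n : ℝ) - 1))
      = (∑ i, (gradf i) ^ 2) * (∑ i, gradR i * gradf i)
        - (∑ i, (gradf i) ^ 2) * ΔR
        + lam * R * (∑ i, (gradf i) ^ 2)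
        - (1 / 2) * (∑ i, (gradR i) ^ 2) :=
  stmt_8_general n hn lam R ΔR gradf gradR Ric hsymm htrace hBianchi hElliptic
end

section
/- Let (Mⁿ,g,f) be a gradient Ricci soliton with Ric + Hess f = ρg, λ = 2ρ, normalized so R + |∇f|² = λf, and let Y = ∇R + (λf − R)∇f. Then the divergence identity 2(λf − R)·div(Y) = −2(n−2)²|D|² − |2R∇f − ∇R|²/(n−1) − |∇R|² + 2(λf − R)²(ρn − R) + 2λR(λf − R) + 2λ(λf − R)|∇f|² holds pointwise. -/
open Finset Matrix

section WedgeSums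

variable {ι : Type*} [Fintype ι]

theorem sum_sq_mul_sub_mul (S : Matrix ι ι ℝ) (a : ι → ℝ) :
    ∑ i, ∑ j, ∑ k, (S j k * a i - S i k * a j) ^ 2
      = 2 * (∑ i, ∑ j, S i j ^ 2) * (a ⬝ᵥ a) - 2 * ((a ᵥ* S) ⬝ᵥ (a ᵥ* S)) := by
  have hcross : ∑ i, ∑ j, ∑ k, a i * S i k * (a j * S j k) = (a ᵥ* S) ⬝ᵥ (a ᵥ* S) :=
    calc ∑ i, ∑ j, ∑ k, a i * S i k * (a j * S j k)
        = ∑ i, ∑ k, ∑ j, a i * S i k * (a j * S j k) := sum_congr rfl fun _ _ => sum_comm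
      _ = ∑ k, ∑ i, ∑ j, a i * S i k * (a j * S j k) := sum_comm
      _ = (a ᵥ* S) ⬝ᵥ (a ᵥ* S) := by simp only [dotProduct, vecMul, sum_mul_sum]
  have hsq : ∀ i j k, (S j k * a i - S i k * a j) ^ 2
      = S j k ^ 2 * a i ^ 2 + S i k ^ 2 * a j ^ 2 - 2 * (a i * S i k * (a j * S j k)) :=
    fun i j k => by ring
  simp only [hsq, sum_add_distrib, sum_sub_distrib, ← mul_sum, ← sum_mul, hcross, dotProduct,
    ← sq]
  ring

theorem sum_sq_delta_sub_delta [DecidableEq ι] (u : ι → ℝ) :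
    ∑ i, ∑ j, ∑ k, ((if j = k then 1 else 0) * u i - (if i = k then 1 else 0) * u j) ^ 2
      = 2 * (Fintype.card ι - 1) * (u ⬝ᵥ u) := by
  have hk : ∀ i j, ∑ k, ((if j = k then 1 else 0) * u i - (if i = k then 1 else 0) * u j) ^ 2
      = u i ^ 2 + u j ^ 2 - 2 * (if j = i then u i * u j else 0) := by
    intro i j
    have hsq : ∀ k, ((if j = k then 1 else 0) * u i - (if i = k then 1 else 0) * u j) ^ 2
        = (if j = k then u i ^ 2 else 0) + (if i = k then u j ^ 2 else 0)
          - 2 * (if i = k then (if j = k then u i * u j else 0) else 0) := by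
      intro k
      split_ifs <;> ring
    simp only [hsq, sum_add_distrib, sum_sub_distrib, ← mul_sum, sum_ite_eq, mem_univ, if_true]
  simp only [hk, sum_add_distrib, sum_sub_distrib, ← mul_sum, sum_ite_eq', mem_univ, if_true,
    sum_const, card_univ, nsmul_eq_mul, dotProduct, ← sq]
  ring

theorem sum_mul_sub_mul_mul_delta_sub_delta [DecidableEq ι] (S : Matrix ι ι ℝ) (a u : ι → ℝ) :
    ∑ i, ∑ j, ∑ k, (S j k * a i - S i k * a j)
        * ((if j = k then 1 else 0) * u i - (if i = k then 1 else 0) * u j)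
      = 2 * (S.trace * (a ⬝ᵥ u) - (S *ᵥ a) ⬝ᵥ u) := by
  have hk : ∀ i j, ∑ k, (S j k * a i - S i k * a j)
        * ((if j = k then 1 else 0) * u i - (if i = k then 1 else 0) * u j)
      = (S j j * a i - S i j * a j) * u i - (S j i * a i - S i i * a j) * u j := by
    intro i j
    have hmul : ∀ k, (S j k * a i - S i k * a j)
        * ((if j = k then 1 else 0) * u i - (if i = k then 1 else 0) * u j)
        = (if j = k then (S j k * a i - S i k * a j) * u i else 0)
          - (if i = k then (S j k * a i - S i k * a j) * u j else 0) := by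
      intro k
      split_ifs <;> ring
    simp only [hmul, sum_sub_distrib, sum_ite_eq, mem_univ, if_true]
  have hswap : ∑ i, ∑ j, (S j i * a i - S i i * a j) * u j
      = -∑ i, ∑ j, (S j j * a i - S i j * a j) * u i := by
    rw [sum_comm, ← sum_neg_distrib]
    refine sum_congr rfl fun i _ => ?_
    rw [← sum_neg_distrib]
    exact sum_congr rfl fun j _ => by ring
  have hhalf : ∑ i, ∑ j, (S j j * a i - S i j * a j) * u i
      = S.trace * (a ⬝ᵥ u) - (S *ᵥ a) ⬝ᵥ u := by
    simp only [trace, Matrix.diag, dotProduct, mulVec, sum_mul, mul_sum, sub_mul,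
      sum_sub_distrib]
    ring_nf
  simp only [hk, sum_sub_distrib, hswap, hhalf]
  ring

end WedgeSums

theorem two_mul_sq_sub_two_mul_sum_sq_Dtensor {n : ℕ}
    (hn1 : (n : ℝ) - 1 ≠ 0) (hn2 : (n : ℝ) - 2 ≠ 0) (R : ℝ)
    (gradf gradR : Fin n → ℝ) (Ric : Matrix (Fin n) (Fin n) ℝ)
    (hsymm : Ric.IsSymm) (htrace : Ric.trace = R)
    (hBianchi : ∀ i, gradR i = 2 * ∑ j, Ric i j * gradf j) :
    2 * ((n : ℝ) - 2) ^ 2 * ∑ i, ∑ j, ∑ k, (Dtensor n R gradf gradR Ric i j k) ^ 2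
      = 4 * (∑ i, ∑ j, Ric i j ^ 2) * (∑ i, gradf i ^ 2) - ∑ i, gradR i ^ 2
        - (∑ i, (2 * R * gradf i - gradR i) ^ 2) / ((n : ℝ) - 1) := by
  set c : ℝ := 1 / ((n : ℝ) - 2)
  set w : Fin n → ℝ := (2 * R) • gradf - gradR
  set u : Fin n → ℝ := (-c / (2 * ((n : ℝ) - 1))) • w
  have hD : ∀ i j k, Dtensor n R gradf gradR Ric i j k
      = c * (Ric j k * gradf i - Ric i k * gradf j)
        + ((if j = k then 1 else 0) * u i - (if i = k then 1 else 0) * u j) := by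
    intro i j k
    simp only [Dtensor, u, w, c, Pi.smul_apply, Pi.sub_apply, smul_eq_mul]
    field_simp
    ring
  have hexpand : ∑ i, ∑ j, ∑ k, (Dtensor n R gradf gradR Ric i j k) ^ 2
      = c ^ 2 * ∑ i, ∑ j, ∑ k, (Ric j k * gradf i - Ric i k * gradf j) ^ 2
        + 2 * c * ∑ i, ∑ j, ∑ k, (Ric j k * gradf i - Ric i k * gradf j)
            * ((if j = k then 1 else 0) * u i - (if i = k then 1 else 0) * u j)
        + ∑ i, ∑ j, ∑ k,
            ((if j = k then 1 else 0) * u i - (if i = k then 1 else 0) * u j) ^ 2 := by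
    simp only [hD, add_sq, mul_pow, sum_add_distrib, mul_sum, mul_assoc]
  have hmulVec : Ric *ᵥ gradf = (1 / 2 : ℝ) • gradR := by
    ext i
    simp [mulVec, dotProduct, hBianchi i]
  have hvecMul : gradf ᵥ* Ric = (1 / 2 : ℝ) • gradR := by
    rw [← mulVec_transpose, hsymm.eq, hmulVec]
  have hwedge :
      Ric.trace * (gradf ⬝ᵥ u) - (Ric *ᵥ gradf) ⬝ᵥ u = (1 / 2 : ℝ) • w ⬝ᵥ u := by
    rw [htrace, hmulVec, ← smul_eq_mul, ← smul_dotProduct, ← sub_dotProduct]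
    congr 1
    ext i
    simp only [w, Pi.sub_apply, Pi.smul_apply, smul_eq_mul]
    ring
  have hw : ∑ i, (2 * R * gradf i - gradR i) ^ 2 = w ⬝ᵥ w := by
    simp only [w, dotProduct, Pi.sub_apply, Pi.smul_apply, smul_eq_mul, sq]
  rw [hexpand, sum_sq_mul_sub_mul, sum_mul_sub_mul_mul_delta_sub_delta, sum_sq_delta_sub_delta,
    hvecMul, hwedge, hw]
  simp only [u, c, smul_dotProduct, dotProduct_smul, smul_eq_mul, Fintype.card_fin]
  simp only [dotProduct, ← sq]
  field_simp
  ring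

theorem stmt_10_general (n : ℕ) (hn : 3 ≤ n) (ρ lam R f ΔR Δf divY : ℝ)
    (gradf gradR : Fin n → ℝ) (Ric : Matrix (Fin n) (Fin n) ℝ)
    (hsymm : Ric.IsSymm) (htrace : Ric.trace = R)
    (hBianchi : ∀ i, gradR i = 2 * ∑ j, Ric i j * gradf j)
    (hnorm : R + ∑ i, (gradf i) ^ 2 = lam * f)
    (hElliptic : 2 * ∑ i, ∑ j, (Ric i j) ^ 2
      = (∑ i, gradR i * gradf i) + lam * R - ΔR)
    (hlapf : Δf = ρ * (n : ℝ) - R)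
    (hdivY : divY = ΔR + lam * (∑ i, (gradf i) ^ 2)
      - (∑ i, gradR i * gradf i) + (lam * f - R) * Δf) :
    2 * (lam * f - R) * divY
      = -2 * ((n : ℝ) - 2) ^ 2 * (∑ i, ∑ j, ∑ k, (Dtensor n R gradf gradR Ric i j k) ^ 2)
        - (∑ i, (2 * R * gradf i - gradR i) ^ 2) / ((n : ℝ) - 1)
        - (∑ i, (gradR i) ^ 2)
        + 2 * (lam * f - R) ^ 2 * (ρ * (n : ℝ) - R)
        + 2 * lam * R * (lam * f - R)
        + 2 * lam * (lam * f - R) * (∑ i, (gradf i) ^ 2) := by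
  have hn3 : (3 : ℝ) ≤ n := by exact_mod_cast hn
  have hD := two_mul_sq_sub_two_mul_sum_sq_Dtensor (by linarith) (by linarith) R gradf gradR Ric
    hsymm htrace hBianchi
  rw [hdivY, hlapf]
  linear_combination hD + 2 * (lam * f - R) * hElliptic + 4 * (∑ i, ∑ j, Ric i j ^ 2) * hnorm

/-- the Robinson–Brendle style divergence identity (Lemma 2.2) for
`Y = ∇R + (λf − R)∇f`, using `Δf = ρn − R` and the expansion of `div Y`. -/
theorem stmt_10 (n : ℕ) (hn : 3 ≤ n) (ρ lam R f ΔR Δf divY : ℝ) (hlam : lam = 2 * ρ)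
    (gradf gradR : Fin n → ℝ) (Ric : Matrix (Fin n) (Fin n) ℝ)
    (hsymm : Ric.IsSymm) (htrace : Ric.trace = R)
    (hBianchi : ∀ i, gradR i = 2 * ∑ j, Ric i j * gradf j)
    (hnorm : R + ∑ i, (gradf i) ^ 2 = lam * f)
    (hElliptic : 2 * ∑ i, ∑ j, (Ric i j) ^ 2
      = (∑ i, gradR i * gradf i) + lam * R - ΔR)
    (hlapf : Δf = ρ * (n : ℝ) - R)
    (hdivY : divY = ΔR + lam * (∑ i, (gradf i) ^ 2)
      - (∑ i, gradR i * gradf i) + (lam * f - R) * Δf) :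
    2 * (lam * f - R) * divY
      = -2 * ((n : ℝ) - 2) ^ 2 * (∑ i, ∑ j, ∑ k, (Dtensor n R gradf gradR Ric i j k) ^ 2)
        - (∑ i, (2 * R * gradf i - gradR i) ^ 2) / ((n : ℝ) - 1)
        - (∑ i, (gradR i) ^ 2)
        + 2 * (lam * f - R) ^ 2 * (ρ * (n : ℝ) - R)
        + 2 * lam * R * (lam * f - R)
        + 2 * lam * (lam * f - R) * (∑ i, (gradf i) ^ 2) :=
  stmt_10_general n hn ρ lam R f ΔR Δf divY gradf gradR Ric hsymm htrace hBianchi hnorm hElliptic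
    hlapf hdivY
end
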